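/- arXiv:1608.04684 — 3 statements merged into one kernel-verified Lean document; each statement's English description precedes it below -/
import Mathlib

section
/- Let R > 0 and let I = (r₁, r₂) be an interval with r₁ ≥ R and r₂ − r₁ ≤ 2R. Let ρ ∈ L^∞(I) satisfy 0 ≤ ρ ≤ 1 almost everywhere, and set ρ̄ := (∫_I ρ(r) r^{-1} dr)/(∫_I r^{-1} dr). Define β(κ) := (π²κ + √(π⁴κ² + 4(ln 3)⁴) + 2(ln 3)²)/(2π²). Then for every κ ∈ [0,1] and every u ∈ W^{1,2}(I, r dr): ∫_I ( κ|u'(r)|² + ρ(r) r^{-2} |u(r)|² ) r dr ≥ (κ ρ̄ / β(κ)) ∫_I |u(r)|² r^{-1} dr. Moreover, κ < β(κ) < κ + 1/4 for all κ ∈ [0,1]. (One-dimensional projection bound, Lemma 4.3.) -/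
/-!
Put `L = log (r₂ / r₁)`; the hypotheses on the interval give `L ≤ log 3`. In the variable
`log r` both weights `r dr` (for `u'`) and `dr / r` (for `u`) become Lebesgue measure, so for the
`dr / r`-mean `c` of `u` Wirtinger's inequality reads `∫ |u - c|² / r ≤ (L / π)² ∫ |u'|² r`. It is
proved through the primitive `W` of `(u - c) / r`, which vanishes at both ends: a Picone identity
with the positive solutions `sin (k log r + θ)` of the Euler equation gives the Dirichlet bound
`(π / L)² ∫ W² / r ≤ ∫ |u - c|² / r`, and an integration by parts with AM-GM turns it into the
Neumann bound. Splitting `ρ |c|² ≤ (β / κ) ρ |u|² + (β / (β - κ)) |u - c|²` and using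
`0 ≤ ρ ≤ 1` then proves the inequality as soon as `1 / β + 1 / (β - κ) ≤ (π / L)²`, and `β(κ)` is
the root of `1 / β + 1 / (β - κ) = π² / (log 3)²` that exceeds `κ`.
-/

open MeasureTheory Real Set

noncomputable section

/-- `β(κ) = (π²κ + √(π⁴κ² + 4(ln 3)⁴) + 2(ln 3)²) / (2π²)`. -/
def betaFn (κ : ℝ) : ℝ :=
  (π ^ 2 * κ + Real.sqrt (π ^ 4 * κ ^ 2 + 4 * Real.log 3 ^ 4) + 2 * Real.log 3 ^ 2)
    / (2 * π ^ 2)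

lemma log_three_lt : log 3 < 1.11 := by
  rw [log_lt_iff_lt_exp (by norm_num)]
  calc (3 : ℝ) < 2.7182818283 * (0.11 + 1) := by norm_num
    _ ≤ exp 1 * exp 0.11 :=
      mul_le_mul exp_one_gt_d9.le (add_one_le_exp _) (by norm_num) (exp_pos 1).le
    _ = exp 1.11 := by rw [← exp_add]; norm_num

lemma eight_mul_log_three_sq_lt_pi_sq : 8 * log 3 ^ 2 < π ^ 2 := by
  have := log_pos (by norm_num : (1 : ℝ) < 3)
  nlinarith [log_three_lt, pi_gt_d6]

lemma two_mul_pi_sq_mul_betaFn (κ : ℝ) :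
    2 * π ^ 2 * betaFn κ = π ^ 2 * κ + √(π ^ 4 * κ ^ 2 + 4 * log 3 ^ 4) + 2 * log 3 ^ 2 := by
  rw [betaFn]; field_simp

lemma pi_sq_mul_abs_le_sqrt (κ : ℝ) : π ^ 2 * |κ| ≤ √(π ^ 4 * κ ^ 2 + 4 * log 3 ^ 4) := by
  apply le_sqrt_of_sq_le
  have : (π ^ 2 * |κ|) ^ 2 = π ^ 4 * κ ^ 2 := by rw [mul_pow, sq_abs]; ring
  nlinarith [pow_pos (log_pos (by norm_num : (1 : ℝ) < 3)) 4]

lemma lt_betaFn (κ : ℝ) : κ < betaFn κ := by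
  have := log_pos (by norm_num : (1 : ℝ) < 3)
  nlinarith [two_mul_pi_sq_mul_betaFn κ, pi_sq_mul_abs_le_sqrt κ, le_abs_self κ, pi_pos,
    sq_nonneg π]

lemma betaFn_pos (κ : ℝ) : 0 < betaFn κ := by
  have := log_pos (by norm_num : (1 : ℝ) < 3)
  have : 0 < 2 * π ^ 2 * betaFn κ := by
    rw [two_mul_pi_sq_mul_betaFn]
    nlinarith [pi_sq_mul_abs_le_sqrt κ, neg_abs_le κ, sq_nonneg π]
  exact pos_of_mul_pos_right this (by positivity)

lemma betaFn_le (κ : ℝ) (hκ : 0 ≤ κ) : betaFn κ ≤ κ + 2 * log 3 ^ 2 / π ^ 2 := by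
  have hs : √(π ^ 4 * κ ^ 2 + 4 * log 3 ^ 4) ≤ π ^ 2 * κ + 2 * log 3 ^ 2 := by
    apply sqrt_le_iff.2 ⟨by positivity, _⟩
    nlinarith [mul_nonneg (mul_nonneg (sq_nonneg π) hκ) (sq_nonneg (log 3))]
  rw [show κ + 2 * log 3 ^ 2 / π ^ 2 = (2 * π ^ 2 * κ + 4 * log 3 ^ 2) / (2 * π ^ 2) by
    field_simp; ring, le_div_iff₀ (by positivity)]
  linarith [two_mul_pi_sq_mul_betaFn κ]

lemma betaFn_lt_add_quarter (κ : ℝ) (hκ : 0 ≤ κ) : betaFn κ < κ + 1 / 4 := by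
  have : 2 * log 3 ^ 2 / π ^ 2 < 1 / 4 := by
    rw [div_lt_iff₀ (by positivity)]; linarith [eight_mul_log_three_sq_lt_pi_sq]
  linarith [betaFn_le κ hκ]

lemma pi_sq_mul_betaFn_mul_sub (κ : ℝ) :
    π ^ 2 * (betaFn κ * (betaFn κ - κ)) = log 3 ^ 2 * (2 * betaFn κ - κ) := by
  have hs := sq_sqrt (by positivity : 0 ≤ π ^ 4 * κ ^ 2 + 4 * log 3 ^ 4)
  rw [show √(π ^ 4 * κ ^ 2 + 4 * log 3 ^ 4) = 2 * π ^ 2 * betaFn κ - π ^ 2 * κ - 2 * log 3 ^ 2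
    by linarith [two_mul_pi_sq_mul_betaFn κ]] at hs
  refine mul_left_cancel₀ (by positivity : 4 * π ^ 2 ≠ 0) ?_
  linear_combination hs

lemma one_div_betaFn_add_one_div_sub (κ : ℝ) :
    1 / betaFn κ + 1 / (betaFn κ - κ) = π ^ 2 / log 3 ^ 2 := by
  have := log_pos (by norm_num : (1 : ℝ) < 3)
  have hsub : 0 < betaFn κ - κ := sub_pos.2 (lt_betaFn κ)
  rw [div_add_div _ _ (betaFn_pos κ).ne' hsub.ne',
    div_eq_div_iff (mul_pos (betaFn_pos κ) hsub).ne' (by positivity)]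
  linear_combination -pi_sq_mul_betaFn_mul_sub κ

section Integrability

variable {a b : ℝ}

lemma aestronglyMeasurable_of_hasDerivAt {F : Type*} [NormedAddCommGroup F] [NormedSpace ℝ F]
    [CompleteSpace F] {f f' : ℝ → F} (hf : ∀ x ∈ Ioo a b, HasDerivAt f (f' x) x) :
    AEStronglyMeasurable f' (volume.restrict (Ioc a b)) := by
  refine (aestronglyMeasurable_deriv f _).congr ?_
  rw [← Measure.restrict_congr_set Ioo_ae_eq_Ioc]
  filter_upwards [ae_restrict_mem measurableSet_Ioo] with x hx using (hf x hx).deriv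

lemma intervalIntegrable_of_sq_mul {g : ℝ → ℝ} (ha : 0 < a) (hab : a ≤ b)
    (hg : AEStronglyMeasurable g (volume.restrict (Ioc a b)))
    (hg2 : IntervalIntegrable (fun x => g x ^ 2 * x) volume a b) :
    IntervalIntegrable g volume a b := by
  refine ((intervalIntegrable_const (c := (1 : ℝ))).add (hg2.div_const a)).mono_fun'
    (by rwa [uIoc_of_le hab]) ?_
  rw [uIoc_of_le hab]
  filter_upwards [ae_restrict_mem measurableSet_Ioc] with x hx
  have : g x ^ 2 ≤ g x ^ 2 * x / a := by
    rw [le_div_iff₀ ha]; exact mul_le_mul_of_nonneg_left hx.1.le (sq_nonneg _)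
  rw [norm_eq_abs]
  nlinarith [sq_abs (g x), abs_nonneg (g x)]

lemma intervalIntegrable_sq_mul_of_abs_le {F : Type*} [NormedAddCommGroup F] {v : ℝ → F}
    {g : ℝ → ℝ} (hab : a ≤ b) (hv : IntervalIntegrable (fun x => ‖v x‖ ^ 2 * x) volume a b)
    (hg : AEStronglyMeasurable g (volume.restrict (Ioc a b))) (hgv : ∀ x, |g x| ≤ ‖v x‖) :
    IntervalIntegrable (fun x => g x ^ 2 * x) volume a b := by
  rw [← uIoc_of_le hab] at hg
  refine hv.mono_fun ((hg.pow 2).mul aestronglyMeasurable_id) (.of_forall fun x => ?_)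
  show ‖g x ^ 2 * x‖ ≤ ‖‖v x‖ ^ 2 * x‖
  rw [norm_mul, norm_mul, norm_pow, norm_pow, norm_norm, norm_eq_abs]
  gcongr
  exact hgv x

lemma intervalIntegrable_inv_of_pos (ha : 0 < a) (hab : a ≤ b) :
    IntervalIntegrable (fun x : ℝ => x⁻¹) volume a b :=
  (continuousOn_inv₀.mono fun _ hx => (ha.trans_le hx.1).ne').intervalIntegrable_of_Icc hab

lemma intervalIntegrable_div_self {h : ℝ → ℝ} (ha : 0 < a) (hab : a ≤ b)
    (hh : ContinuousOn h (Icc a b)) : IntervalIntegrable (fun x => h x / x) volume a b :=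
  (hh.div continuousOn_id fun _ hx => (ha.trans_le hx.1).ne').intervalIntegrable_of_Icc hab

lemma intervalIntegrable_mul_of_mem_unitInterval {ρ g : ℝ → ℝ} (hab : a ≤ b)
    (hρm : AEStronglyMeasurable ρ (volume.restrict (Ioc a b)))
    (hρ : ∀ᵐ x ∂volume.restrict (Ioc a b), 0 ≤ ρ x ∧ ρ x ≤ 1) (hg : ContinuousOn g (Icc a b)) :
    IntervalIntegrable (fun x => ρ x * g x) volume a b :=
  (intervalIntegrable_iff_integrableOn_Ioc_of_le hab).2
    ((hg.integrableOn_Icc.mono_set Ioc_subset_Icc_self).bdd_mul (c := 1) hρm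
      (hρ.mono fun _ hx => abs_le.2 ⟨by linarith [hx.1], hx.2⟩))

lemma continuousOn_primitive_of_continuousOn {g : ℝ → ℝ} (hab : a ≤ b)
    (hg : ContinuousOn g (Icc a b)) : ContinuousOn (fun x => ∫ t in a..x, g t) (Icc a b) := by
  have := intervalIntegral.continuousOn_primitive_interval (μ := volume)
    (hg.integrableOn_Icc.mono_set (uIcc_of_le hab).le)
  rwa [uIcc_of_le hab] at this

lemma hasDerivAt_primitive_of_continuousOn {g : ℝ → ℝ} (hg : ContinuousOn g (Icc a b)) :
    ∀ x ∈ Ioo a b, HasDerivAt (fun x => ∫ t in a..x, g t) (g x) x := fun x hx =>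
  intervalIntegral.integral_hasDerivAt_right
    ((hg.mono (Icc_subset_Icc le_rfl hx.2.le)).intervalIntegrable_of_Icc hx.1.le)
    ((hg.mono Ioo_subset_Icc_self).stronglyMeasurableAtFilter isOpen_Ioo x hx)
    (hg.continuousAt (Icc_mem_nhds hx.1 hx.2))

lemma neg_integral_mul_le {W g : ℝ → ℝ} {t : ℝ} (ha : 0 < a) (hab : a ≤ b) (ht : 0 < t)
    (hW : ContinuousOn W (Icc a b)) (hg : IntervalIntegrable g volume a b)
    (hg2 : IntervalIntegrable (fun x => g x ^ 2 * x) volume a b) :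
    -∫ x in a..b, W x * g x
      ≤ (t * (∫ x in a..b, W x ^ 2 / x) + (∫ x in a..b, g x ^ 2 * x) / t) / 2 := by
  have hW2 : IntervalIntegrable (fun x => W x ^ 2 / x) volume a b :=
    intervalIntegrable_div_self ha hab (hW.pow 2)
  rw [← intervalIntegral.integral_neg, ← intervalIntegral.integral_const_mul,
    ← intervalIntegral.integral_div, ← intervalIntegral.integral_add (hW2.const_mul t)
    (hg2.div_const t), ← intervalIntegral.integral_div]
  refine intervalIntegral.integral_mono_on hab (hg.continuousOn_mul (by rwa [uIcc_of_le hab])).neg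
    (((hW2.const_mul t).add (hg2.div_const t)).div_const 2) fun x hx => ?_
  have hx : 0 < x := ha.trans_le hx.1
  have key : (t * (W x ^ 2 / x) + g x ^ 2 * x / t) / 2 + W x * g x
      = (t * W x + x * g x) ^ 2 / (2 * t * x) := by
    field_simp; ring
  have : 0 ≤ (t * W x + x * g x) ^ 2 / (2 * t * x) := by positivity
  linarith

lemma integral_eq_add_of_eq_add {F G H : ℝ → ℝ} (hG : IntervalIntegrable G volume a b)
    (hH : IntervalIntegrable H volume a b) (hF : ∀ x, F x = G x + H x) :
    ∫ x in a..b, F x = (∫ x in a..b, G x) + ∫ x in a..b, H x := by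
  rw [← intervalIntegral.integral_add hG hH]; simp only [hF]

end Integrability

section Moments

variable {a b c : ℝ} {h : ℝ → ℝ}

lemma integral_sub_div (ha : 0 < a) (hab : a ≤ b) (hh : ContinuousOn h (Icc a b)) :
    ∫ x in a..b, (h x - c) / x = (∫ x in a..b, h x / x) - c * ∫ x in a..b, x⁻¹ := by
  have h0 : IntervalIntegrable (fun x => c * x⁻¹) volume a b :=
    (intervalIntegrable_inv_of_pos ha hab).const_mul c
  calc ∫ x in a..b, (h x - c) / x = ∫ x in a..b, (h x / x - c * x⁻¹) := by
        congr 1 with x; ring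
    _ = _ := by
        rw [intervalIntegral.integral_sub (intervalIntegrable_div_self ha hab hh) h0,
          intervalIntegral.integral_const_mul]

lemma integral_sub_sq_div (ha : 0 < a) (hab : a ≤ b) (hh : ContinuousOn h (Icc a b)) :
    ∫ x in a..b, (h x - c) ^ 2 / x
      = (∫ x in a..b, h x ^ 2 / x) - 2 * c * (∫ x in a..b, h x / x)
        + c ^ 2 * ∫ x in a..b, x⁻¹ := by
  have h2 : IntervalIntegrable (fun x => h x ^ 2 / x) volume a b :=
    intervalIntegrable_div_self ha hab (hh.pow 2)
  have h1 := (intervalIntegrable_div_self ha hab hh).const_mul (2 * c)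
  have h0 : IntervalIntegrable (fun x => c ^ 2 * x⁻¹) volume a b :=
    (intervalIntegrable_inv_of_pos ha hab).const_mul _
  calc ∫ x in a..b, (h x - c) ^ 2 / x
        = ∫ x in a..b, (h x ^ 2 / x - 2 * c * (h x / x) + c ^ 2 * x⁻¹) := by
        congr 1 with x; ring
    _ = _ := by
        rw [intervalIntegral.integral_add (h2.sub h1) h0, intervalIntegral.integral_sub h2 h1,
          intervalIntegral.integral_const_mul, intervalIntegral.integral_const_mul]

end Moments

section Wirtinger

variable {a b : ℝ}

theorem integral_sq_div_le_of_sin_pos {k θ : ℝ} {W w : ℝ → ℝ} (ha : 0 < a) (hab : a ≤ b)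
    (hsin : ∀ x ∈ Icc a b, 0 < sin (k * log x + θ))
    (hW : ContinuousOn W (Icc a b)) (hWw : ∀ x ∈ Ioo a b, HasDerivAt W (w x) x)
    (hw : ContinuousOn w (Icc a b)) (hWa : W a = 0) (hWb : W b = 0) :
    k ^ 2 * ∫ x in a..b, W x ^ 2 / x ≤ ∫ x in a..b, w x ^ 2 * x := by
  have hx0 : ∀ x ∈ Icc a b, x ≠ 0 := fun x hx => (ha.trans_le hx.1).ne'
  have hsin0 : ∀ x ∈ Icc a b, sin (k * log x + θ) ≠ 0 := fun x hx => (hsin x hx).ne'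
  have hsin2 : ∀ x ∈ Icc a b, sin (k * log x + θ) ^ 2 ≠ 0 := fun x hx =>
    pow_ne_zero 2 (hsin0 x hx)
  have hlog : ContinuousOn log (Icc a b) := continuousOn_log.mono fun x hx => hx0 x hx
  -- `y = sin (k log x + θ)` solves `(x y')' + k² y / x = 0`; `Q` is the Picone term `x y' W² / y`
  set Q : ℝ → ℝ := fun x => k * (cos (k * log x + θ) / sin (k * log x + θ)) * W x ^ 2
  set Q' : ℝ → ℝ := fun x => k * (-(k / x) / sin (k * log x + θ) ^ 2) * W x ^ 2
      + k * (cos (k * log x + θ) / sin (k * log x + θ)) * (2 * W x * w x)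
  have hQ : ContinuousOn Q (Icc a b) := by fun_prop (disch := assumption)
  have hQ' : ContinuousOn Q' (Icc a b) := by fun_prop (disch := assumption)
  have hQQ' : ∀ x ∈ Ioo a b, HasDerivAt Q (Q' x) x := by
    intro x hx
    have hxne := hx0 x (Ioo_subset_Icc_self hx)
    have hsne := hsin0 x (Ioo_subset_Icc_self hx)
    have hφ : HasDerivAt (fun y => k * log y + θ) (k / x) x := by
      simpa [div_eq_mul_inv] using ((hasDerivAt_log hxne).const_mul k).add_const θ
    have hcot : HasDerivAt (fun y => cos (k * log y + θ) / sin (k * log y + θ))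
        (-(k / x) / sin (k * log x + θ) ^ 2) x := by
      refine (hφ.cos.div hφ.sin hsne).congr_deriv ?_
      field_simp
      linear_combination (-k) * sin_sq_add_cos_sq (k * log x + θ)
    exact ((hcot.const_mul k).mul ((hWw x hx).pow 2)).congr_deriv
      (by simp only [Q', Pi.pow_apply]; ring)
  have hpicone : ∀ x ∈ Icc a b, k ^ 2 * (W x ^ 2 / x) ≤ w x ^ 2 * x - Q' x := by
    intro x hx
    have hxpos : 0 < x := ha.trans_le hx.1
    have hsne := hsin0 x hx
    have key : w x ^ 2 * x - Q' x - k ^ 2 * (W x ^ 2 / x) =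
        (w x * x * sin (k * log x + θ) - k * cos (k * log x + θ) * W x) ^ 2
          / (x * sin (k * log x + θ) ^ 2) := by
      simp only [Q']
      field_simp
      linear_combination (-k ^ 2 * W x ^ 2) * sin_sq_add_cos_sq (k * log x + θ)
    have : 0 ≤ (w x * x * sin (k * log x + θ) - k * cos (k * log x + θ) * W x) ^ 2
        / (x * sin (k * log x + θ) ^ 2) := by positivity
    linarith
  have hcont : ∀ {f : ℝ → ℝ}, ContinuousOn f (Icc a b) → IntervalIntegrable f volume a b :=
    fun hf => hf.intervalIntegrable_of_Icc hab
  have hFTC : ∫ x in a..b, Q' x = 0 := by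
    rw [intervalIntegral.integral_eq_sub_of_hasDerivAt_of_le hab hQ hQQ' (hcont hQ')]
    simp [Q, hWa, hWb]
  calc k ^ 2 * ∫ x in a..b, W x ^ 2 / x = ∫ x in a..b, k ^ 2 * (W x ^ 2 / x) :=
        (intervalIntegral.integral_const_mul _ _).symm
    _ ≤ ∫ x in a..b, (w x ^ 2 * x - Q' x) :=
        intervalIntegral.integral_mono_on hab (hcont (by fun_prop (disch := assumption)))
          (hcont ((by fun_prop : ContinuousOn (fun x => w x ^ 2 * x) _).sub hQ')) hpicone
    _ = ∫ x in a..b, w x ^ 2 * x := by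
        rw [intervalIntegral.integral_sub (hcont (by fun_prop)) (hcont hQ'), hFTC, sub_zero]

theorem integral_sq_div_le_of_boundary_eq_zero {W w : ℝ → ℝ} (ha : 0 < a) (hab : a < b)
    (hW : ContinuousOn W (Icc a b)) (hWw : ∀ x ∈ Ioo a b, HasDerivAt W (w x) x)
    (hw : ContinuousOn w (Icc a b)) (hWa : W a = 0) (hWb : W b = 0) :
    (π / log (b / a)) ^ 2 * ∫ x in a..b, W x ^ 2 / x ≤ ∫ x in a..b, w x ^ 2 * x := by
  set L := log (b / a)
  have hL : 0 < L := log_pos ((one_lt_div ha).2 hab)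
  have hlog : ∀ x ∈ Icc a b, 0 ≤ log x - log a ∧ log x - log a ≤ L := fun x hx => by
    have hx0 : 0 < x := ha.trans_le hx.1
    rw [← log_div hx0.ne' ha.ne']
    exact ⟨log_nonneg ((one_le_div ha).2 hx.1),
      log_le_log (div_pos hx0 ha) (by gcongr; exact hx.2)⟩
  -- on an interval of logarithmic length `ℓ > L` the ground state has no zero in `[a, b]`
  have hℓ : ∀ ℓ ∈ Ioi L,
      (π / ℓ) ^ 2 * ∫ x in a..b, W x ^ 2 / x ≤ ∫ x in a..b, w x ^ 2 * x := by
    intro ℓ (hℓ : L < ℓ)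
    have hkL : π / ℓ * L < π := by
      rw [div_mul_eq_mul_div, div_lt_iff₀ (hL.trans hℓ)]; gcongr
    refine integral_sq_div_le_of_sin_pos (θ := (π - π / ℓ * L) / 2 - π / ℓ * log a) ha hab.le
      (fun x hx => sin_pos_of_pos_of_lt_pi ?_ ?_) hW hWw hw hWa hWb
    · nlinarith [hlog x hx, div_pos pi_pos (hL.trans hℓ)]
    · nlinarith [hlog x hx, div_pos pi_pos (hL.trans hℓ)]
  have hcont : ContinuousAt (fun ℓ => (π / ℓ) ^ 2 * ∫ x in a..b, W x ^ 2 / x) L := by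
    fun_prop (disch := exact hL.ne')
  exact le_of_tendsto (hcont.tendsto.mono_left (nhdsWithin_le_nhds (s := Ioi L)))
    (eventually_nhdsWithin_of_forall hℓ)

theorem integral_sq_div_le_of_integral_div_eq_zero {f f' : ℝ → ℝ} (ha : 0 < a) (hab : a < b)
    (hf : ∀ x ∈ Icc a b, HasDerivAt f (f' x) x)
    (hf' : IntervalIntegrable (fun x => f' x ^ 2 * x) volume a b)
    (hmean : ∫ x in a..b, f x / x = 0) :
    ∫ x in a..b, f x ^ 2 / x ≤ (log (b / a) / π) ^ 2 * ∫ x in a..b, f' x ^ 2 * x := by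
  have hx0 : ∀ x ∈ Icc a b, x ≠ 0 := fun x hx => (ha.trans_le hx.1).ne'
  have hIcc : uIcc a b = Icc a b := uIcc_of_le hab.le
  have hfc : ContinuousOn f (Icc a b) := fun x hx => (hf x hx).continuousAt.continuousWithinAt
  have hg : ContinuousOn (fun x => f x / x) (Icc a b) := hfc.div continuousOn_id hx0
  set W : ℝ → ℝ := fun x => ∫ s in a..x, f s / s
  have hW : ContinuousOn W (Icc a b) := continuousOn_primitive_of_continuousOn hab.le hg
  have hWd : ∀ x ∈ Ioo a b, HasDerivAt W (f x / x) x := hasDerivAt_primitive_of_continuousOn hg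
  have hf'i : IntervalIntegrable f' volume a b :=
    intervalIntegrable_of_sq_mul ha hab.le
      (aestronglyMeasurable_of_hasDerivAt fun x hx => hf x (Ioo_subset_Icc_self hx)) hf'
  set I := ∫ x in a..b, f x ^ 2 / x
  set D := ∫ x in a..b, f' x ^ 2 * x
  set t := (π / log (b / a)) ^ 2
  have ht : 0 < t := by have := log_pos ((one_lt_div ha).2 hab); positivity
  have hDir : t * ∫ x in a..b, W x ^ 2 / x ≤ I := by
    refine (integral_sq_div_le_of_boundary_eq_zero ha hab hW hWd hg intervalIntegral.integral_same
      hmean).trans_eq (intervalIntegral.integral_congr fun x hx => ?_)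
    field_simp [hx0 x (hIcc ▸ hx)]
  have hIBP : I = -∫ x in a..b, W x * f' x := by
    have := intervalIntegral.integral_mul_deriv_eq_deriv_mul_of_hasDerivAt (v := f) (by rwa [hIcc])
      (by rwa [hIcc]) (by simpa only [min_eq_left hab.le, max_eq_right hab.le] using hWd)
      (by simpa only [min_eq_left hab.le, max_eq_right hab.le]
        using fun x hx => hf x (Ioo_subset_Icc_self hx))
      (hg.intervalIntegrable_of_Icc hab.le) hf'i
    rw [this, show W b = 0 from hmean, show W a = 0 from intervalIntegral.integral_same,
      zero_mul, zero_mul, sub_self, zero_sub, neg_neg]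
    refine intervalIntegral.integral_congr fun x hx => ?_
    field_simp [hx0 x (hIcc ▸ hx)]
  have hAMGM := neg_integral_mul_le ha hab.le ht hW hf'i hf'
  calc I ≤ D / t := by linarith
    _ = (log (b / a) / π) ^ 2 * D := by simp only [t]; field_simp

end Wirtinger

lemma div_mul_sq_le_mul_sq_add {κ β ρ : ℝ} (hκ : 0 ≤ κ) (hκβ : κ < β) (hρ0 : 0 ≤ ρ) (hρ1 : ρ ≤ 1)
    (y c : ℝ) : κ / β * (ρ * c ^ 2) ≤ ρ * y ^ 2 + κ / (β - κ) * (y - c) ^ 2 := by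
  have hβ : 0 < β := hκ.trans_lt hκβ
  have hβκ : 0 < β - κ := sub_pos.2 hκβ
  rw [div_mul_eq_mul_div, div_le_iff₀ hβ, add_mul, div_mul_eq_mul_div, div_mul_eq_mul_div,
    ← sub_le_iff_le_add', le_div_iff₀ hβκ]
  -- weighted Cauchy–Schwarz `c² ≤ (β / κ) y² + (β / (β - κ)) (y - c)²`, then `ρ ≤ 1`
  nlinarith [mul_nonneg hρ0 (sq_nonneg ((β - κ) * y + κ * (y - c))),
    mul_nonneg (sub_nonneg.2 hρ1) (mul_nonneg (mul_nonneg hκ hβ.le) (sq_nonneg (y - c)))]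

lemma Complex.sq_norm_eq_re_sq_add_im_sq (z : ℂ) : ‖z‖ ^ 2 = z.re ^ 2 + z.im ^ 2 := by
  rw [Complex.sq_norm, Complex.normSq_apply]; ring

section Projection

variable {a b κ β : ℝ} {ρ : ℝ → ℝ}

lemma intervalIntegrable_div_of_mem_unitInterval (ha : 0 < a) (hab : a ≤ b)
    (hρm : AEStronglyMeasurable ρ (volume.restrict (Ioc a b)))
    (hρ : ∀ᵐ x ∂volume.restrict (Ioc a b), 0 ≤ ρ x ∧ ρ x ≤ 1) :
    IntervalIntegrable (fun x => ρ x / x) volume a b := by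
  simpa only [div_eq_mul_inv] using intervalIntegrable_mul_of_mem_unitInterval hab hρm hρ
    (continuousOn_inv₀.mono fun _ hx => (ha.trans_le hx.1).ne')

lemma integral_div_le_integral_inv (ha : 0 < a) (hab : a ≤ b)
    (hρm : AEStronglyMeasurable ρ (volume.restrict (Ioc a b)))
    (hρ : ∀ᵐ x ∂volume.restrict (Ioc a b), 0 ≤ ρ x ∧ ρ x ≤ 1) :
    ∫ x in a..b, ρ x / x ≤ ∫ x in a..b, x⁻¹ := by
  refine intervalIntegral.integral_mono_ae_restrict hab
    (intervalIntegrable_div_of_mem_unitInterval ha hab hρm hρ)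
    (intervalIntegrable_inv_of_pos ha hab) ?_
  rw [← Measure.restrict_congr_set Ioc_ae_eq_Icc]
  filter_upwards [hρ, ae_restrict_mem measurableSet_Ioc] with x hρx hx
  rw [div_eq_mul_inv]
  exact mul_le_of_le_one_left (inv_nonneg.2 (ha.le.trans hx.1.le)) hρx.2

lemma sub_le_integral_mul_sq_div {f : ℝ → ℝ} (ha : 0 < a) (hab : a ≤ b) (hκ : 0 ≤ κ)
    (hκβ : κ < β) (hρm : AEStronglyMeasurable ρ (volume.restrict (Ioc a b)))
    (hρ : ∀ᵐ x ∂volume.restrict (Ioc a b), 0 ≤ ρ x ∧ ρ x ≤ 1) (hf : ContinuousOn f (Icc a b))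
    (c : ℝ) :
    κ / β * c ^ 2 * (∫ x in a..b, ρ x / x) - κ / (β - κ) * ∫ x in a..b, (f x - c) ^ 2 / x
      ≤ ∫ x in a..b, ρ x * (f x ^ 2 / x) := by
  have hρi := intervalIntegrable_div_of_mem_unitInterval ha hab hρm hρ
  have hXi : IntervalIntegrable (fun x => (f x - c) ^ 2 / x) volume a b :=
    intervalIntegrable_div_self ha hab ((hf.sub continuousOn_const).pow 2)
  rw [← intervalIntegral.integral_const_mul, ← intervalIntegral.integral_const_mul,
    ← intervalIntegral.integral_sub (hρi.const_mul _) (hXi.const_mul _)]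
  refine intervalIntegral.integral_mono_ae_restrict hab ((hρi.const_mul _).sub (hXi.const_mul _))
    (intervalIntegrable_mul_of_mem_unitInterval hab hρm hρ
      ((hf.pow 2).div continuousOn_id fun _ hx => (ha.trans_le hx.1).ne')) ?_
  rw [← Measure.restrict_congr_set Ioc_ae_eq_Icc]
  filter_upwards [hρ, ae_restrict_mem measurableSet_Ioc] with x hρx hx
  have := div_mul_sq_le_mul_sq_add hκ hκβ hρx.1 hρx.2 (f x) c
  have hx : 0 < x := ha.trans hx.1
  calc κ / β * c ^ 2 * (ρ x / x) - κ / (β - κ) * ((f x - c) ^ 2 / x)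
      = (κ / β * (ρ x * c ^ 2) - κ / (β - κ) * (f x - c) ^ 2) / x := by ring
    _ ≤ ρ x * f x ^ 2 / x := by gcongr; linarith
    _ = ρ x * (f x ^ 2 / x) := by ring

theorem real_projection_bound {f f' : ℝ → ℝ} (ha : 0 < a) (hab : a < b) (hκ : 0 ≤ κ)
    (hκβ : κ < β) (hβ : 1 / β + 1 / (β - κ) ≤ (π / log (b / a)) ^ 2)
    (hρm : AEStronglyMeasurable ρ (volume.restrict (Ioc a b)))
    (hρ : ∀ᵐ x ∂volume.restrict (Ioc a b), 0 ≤ ρ x ∧ ρ x ≤ 1)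
    (hf : ∀ x ∈ Icc a b, HasDerivAt f (f' x) x)
    (hf' : IntervalIntegrable (fun x => f' x ^ 2 * x) volume a b) :
    κ * ((∫ x in a..b, ρ x / x) / ∫ x in a..b, x⁻¹) / β * ∫ x in a..b, f x ^ 2 / x
      ≤ κ * (∫ x in a..b, f' x ^ 2 * x) + ∫ x in a..b, ρ x * (f x ^ 2 / x) := by
  have hLlog : ∫ x in a..b, x⁻¹ = log (b / a) := integral_inv_of_pos ha (ha.trans hab)
  set L := ∫ x in a..b, x⁻¹
  have hL : 0 < L := hLlog ▸ log_pos ((one_lt_div ha).2 hab)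
  rw [← hLlog] at hβ
  have hfc : ContinuousOn f (Icc a b) := fun x hx => (hf x hx).continuousAt.continuousWithinAt
  set c := (∫ x in a..b, f x / x) / L
  have hcL : ∫ x in a..b, f x / x = c * L := (div_mul_cancel₀ _ hL.ne').symm
  set A := ∫ x in a..b, ρ x / x
  set X := ∫ x in a..b, (f x - c) ^ 2 / x
  set D := ∫ x in a..b, f' x ^ 2 * x
  have hX0 : 0 ≤ X := intervalIntegral.integral_nonneg hab.le
    fun x hx => div_nonneg (sq_nonneg _) (ha.le.trans hx.1)
  have hXD : (π / L) ^ 2 * X ≤ D := by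
    have := integral_sq_div_le_of_integral_div_eq_zero ha hab (fun x hx => (hf x hx).sub_const c)
      hf' (by rw [integral_sub_div ha hab.le hfc, hcL, sub_self])
    rw [← hLlog] at this
    calc (π / L) ^ 2 * X ≤ (π / L) ^ 2 * ((L / π) ^ 2 * D) := by gcongr
      _ = D := by field_simp
  have hsplit : ∫ x in a..b, f x ^ 2 / x = L * c ^ 2 + X := by
    have := integral_sub_sq_div (c := c) ha hab.le hfc
    rw [hcL] at this
    linear_combination -this
  have hβ0 : 0 < β := hκ.trans_lt hκβ
  have hA : κ * (A / L) / β * X ≤ κ / β * X := by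
    rw [div_mul_eq_mul_div, div_mul_eq_mul_div]
    gcongr
    exact mul_le_of_le_one_right hκ
      ((div_le_one hL).2 (integral_div_le_integral_inv ha hab.le hρm hρ))
  have hβX : κ * (1 / β + 1 / (β - κ)) * X ≤ κ * D := by
    rw [mul_assoc]; gcongr; exact (mul_le_mul_of_nonneg_right hβ hX0).trans hXD
  have hP := sub_le_integral_mul_sq_div ha hab.le hκ hκβ hρm hρ hfc c
  calc κ * (A / L) / β * ∫ x in a..b, f x ^ 2 / x
      = κ / β * c ^ 2 * A + κ * (A / L) / β * X := by rw [hsplit]; field_simp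
    _ ≤ κ * D + ∫ x in a..b, ρ x * (f x ^ 2 / x) := by
      linear_combination hA + hβX + hP

theorem complex_projection_bound {u u' : ℝ → ℂ} (ha : 0 < a) (hab : a < b) (hκ : 0 ≤ κ)
    (hκβ : κ < β) (hβ : 1 / β + 1 / (β - κ) ≤ (π / log (b / a)) ^ 2)
    (hρm : AEStronglyMeasurable ρ (volume.restrict (Ioc a b)))
    (hρ : ∀ᵐ x ∂volume.restrict (Ioc a b), 0 ≤ ρ x ∧ ρ x ≤ 1)
    (hu : ∀ x ∈ Icc a b, HasDerivAt u (u' x) x)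
    (hu' : IntervalIntegrable (fun x => ‖u' x‖ ^ 2 * x) volume a b) :
    κ * ((∫ x in a..b, ρ x / x) / ∫ x in a..b, x⁻¹) / β * ∫ x in a..b, ‖u x‖ ^ 2 / x
      ≤ κ * (∫ x in a..b, ‖u' x‖ ^ 2 * x) + ∫ x in a..b, ρ x * (‖u x‖ ^ 2 / x) := by
  have hucont : ContinuousOn u (Icc a b) := fun x hx => (hu x hx).continuousAt.continuousWithinAt
  have hrec : ContinuousOn (fun x => (u x).re) (Icc a b) :=
    Complex.continuous_re.comp_continuousOn hucont
  have himc : ContinuousOn (fun x => (u x).im) (Icc a b) :=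
    Complex.continuous_im.comp_continuousOn hucont
  have hu'm : AEStronglyMeasurable u' (volume.restrict (Ioc a b)) :=
    aestronglyMeasurable_of_hasDerivAt fun x hx => hu x (Ioo_subset_Icc_self hx)
  have hre' := intervalIntegrable_sq_mul_of_abs_le hab.le hu'
    (Complex.continuous_re.comp_aestronglyMeasurable hu'm) fun x => Complex.abs_re_le_norm _
  have him' := intervalIntegrable_sq_mul_of_abs_le hab.le hu'
    (Complex.continuous_im.comp_aestronglyMeasurable hu'm) fun x => Complex.abs_im_le_norm _
  have hre := real_projection_bound (f := fun x => (u x).re) (f' := fun x => (u' x).re)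
    ha hab hκ hκβ hβ hρm hρ (fun x hx => Complex.reCLM.hasFDerivAt.comp_hasDerivAt x (hu x hx)) hre'
  have him := real_projection_bound (f := fun x => (u x).im) (f' := fun x => (u' x).im)
    ha hab hκ hκβ hβ hρm hρ (fun x hx => Complex.imCLM.hasFDerivAt.comp_hasDerivAt x (hu x hx)) him'
  have hsplit := @integral_eq_add_of_eq_add a b
  have hnorm := Complex.sq_norm_eq_re_sq_add_im_sq
  have hx0 : ∀ x ∈ Icc a b, x ≠ 0 := fun x hx => (ha.trans_le hx.1).ne'
  have hX : ∫ x in a..b, ‖u x‖ ^ 2 / x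
      = (∫ x in a..b, (u x).re ^ 2 / x) + ∫ x in a..b, (u x).im ^ 2 / x :=
    hsplit (intervalIntegrable_div_self ha hab.le (hrec.pow 2))
      (intervalIntegrable_div_self ha hab.le (himc.pow 2)) fun x => by rw [hnorm, add_div]
  have hD : ∫ x in a..b, ‖u' x‖ ^ 2 * x
      = (∫ x in a..b, (u' x).re ^ 2 * x) + ∫ x in a..b, (u' x).im ^ 2 * x :=
    hsplit hre' him' fun x => by rw [hnorm, add_mul]
  have hP : ∫ x in a..b, ρ x * (‖u x‖ ^ 2 / x)
      = (∫ x in a..b, ρ x * ((u x).re ^ 2 / x)) + ∫ x in a..b, ρ x * ((u x).im ^ 2 / x) :=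
    hsplit (intervalIntegrable_mul_of_mem_unitInterval hab.le hρm hρ
        ((hrec.pow 2).div continuousOn_id hx0))
      (intervalIntegrable_mul_of_mem_unitInterval hab.le hρm hρ
        ((himc.pow 2).div continuousOn_id hx0))
      fun x => by rw [hnorm, add_div, mul_add]
  rw [hX, hD, hP]
  linear_combination hre + him

end Projection

lemma integral_mul_add_div_sq_mul {a b κ : ℝ} {p q ρ : ℝ → ℝ}
    (hp : IntervalIntegrable (fun x => p x * x) volume a b)
    (hq : IntervalIntegrable (fun x => ρ x * (q x / x)) volume a b) :
    ∫ x in a..b, (κ * p x + ρ x / x ^ 2 * q x) * x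
      = κ * (∫ x in a..b, p x * x) + ∫ x in a..b, ρ x * (q x / x) := by
  rw [← intervalIntegral.integral_const_mul, ← intervalIntegral.integral_add (hp.const_mul κ) hq]
  congr 1 with x
  rcases eq_or_ne x 0 with rfl | hx
  · simp
  · field_simp

/-- **One-dimensional projection bound** (Lemma 4.3).  Let `R > 0`, `I = (r₁,r₂)` with
`r₁ ≥ R` and `r₂ - r₁ ≤ 2R`, and let `ρ ∈ L^∞(I)` with `0 ≤ ρ ≤ 1` a.e.  Then for every
`κ ∈ [0,1]` and every `u ∈ W^{1,2}(I, r dr)`,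
`∫_I (κ|u'|² + ρ r⁻²|u|²) r dr ≥ (κ ρ̄ / β(κ)) ∫_I |u|² r⁻¹ dr`, where
`ρ̄ = (∫_I ρ/r)/(∫_I 1/r)`; moreover `κ < β(κ) < κ + 1/4` for all `κ ∈ [0,1]`. -/
theorem one_dimensional_projection_bound
    (R r₁ r₂ : ℝ) (hR : 0 < R) (hr₁ : R ≤ r₁) (hI : r₂ - r₁ ≤ 2 * R) (h12 : r₁ < r₂)
    (ρ : ℝ → ℝ) (hmeas : Measurable ρ)
    (hbdd : ∀ᵐ r ∂(volume.restrict (Set.Ioo r₁ r₂)), 0 ≤ ρ r ∧ ρ r ≤ 1) :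
    (∀ κ ∈ Set.Icc (0:ℝ) 1, ∀ u u' : ℝ → ℂ,
      (∀ r ∈ Set.Icc r₁ r₂, HasDerivAt u (u' r) r) →
      IntervalIntegrable (fun r => (‖u r‖ ^ 2 + ‖u' r‖ ^ 2) * r) volume r₁ r₂ →
      κ * ((∫ r in r₁..r₂, ρ r / r) / (∫ r in r₁..r₂, r⁻¹)) / betaFn κ
          * ∫ r in r₁..r₂, ‖u r‖ ^ 2 / r
        ≤ ∫ r in r₁..r₂, (κ * ‖u' r‖ ^ 2 + ρ r / r ^ 2 * ‖u r‖ ^ 2) * r)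
    ∧ ∀ κ ∈ Set.Icc (0:ℝ) 1, κ < betaFn κ ∧ betaFn κ < κ + 1 / 4 := by
  refine ⟨fun κ hκ u u' hu hu2 => ?_, fun κ hκ => ⟨lt_betaFn κ, betaFn_lt_add_quarter κ hκ.1⟩⟩
  have ha : 0 < r₁ := hR.trans_le hr₁
  have hρ : ∀ᵐ r ∂volume.restrict (Ioc r₁ r₂), 0 ≤ ρ r ∧ ρ r ≤ 1 := by
    rwa [← Measure.restrict_congr_set Ioo_ae_eq_Ioc]
  have hβ : 1 / betaFn κ + 1 / (betaFn κ - κ) ≤ (π / log (r₂ / r₁)) ^ 2 := by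
    have := log_pos ((one_lt_div ha).2 h12)
    have : log (r₂ / r₁) ≤ log 3 :=
      log_le_log (div_pos (ha.trans h12) ha) ((div_le_iff₀ ha).2 (by linarith))
    rw [one_div_betaFn_add_one_div_sub, div_pow]
    gcongr
  have hucont : ContinuousOn u (Icc r₁ r₂) := fun r hr => (hu r hr).continuousAt.continuousWithinAt
  have hu' : IntervalIntegrable (fun r => ‖u' r‖ ^ 2 * r) volume r₁ r₂ :=
    (hu2.sub (((hucont.norm.pow 2).mul continuousOn_id).intervalIntegrable_of_Icc h12.le)).congr
      fun r _ => by simp only [Pi.mul_apply, Pi.pow_apply, id]; ring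
  rw [integral_mul_add_div_sq_mul (q := fun r => ‖u r‖ ^ 2) hu'
    (intervalIntegrable_mul_of_mem_unitInterval h12.le hmeas.aestronglyMeasurable hρ
      ((hucont.norm.pow 2).div continuousOn_id fun r hr => (ha.trans_le hr.1).ne'))]
  exact complex_projection_bound ha h12 hκ.1 (lt_betaFn κ) hβ hmeas.aestronglyMeasurable hρ hu hu'
end
end

section
/- Let R > 0 and y_1,…,y_m ∈ ℝ², and let 𝒩 be the particle counting function. Suppose R/2 ≤ z⁻ < z⁺ are such that 𝒩(z⁻) ∈ ℤ, 𝒩(z⁺) ∈ ℤ, and 𝒩(r) ∉ ℤ for every r ∈ (z⁻, z⁺). Then there exists l ∈ {1,…,m} such that, with d := |y_l|, the interval [z⁻, z⁺] is contained in [d − R, d + R]; i.e., the angular projection of some particle disk completely covers the interval. (Lemma 4.4.) -/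
open MeasureTheory Real Set

noncomputable section

/-- The plane `ℝ²`. -/
abbrev Plane : Type := EuclideanSpace ℝ (Fin 2)

/-- The particle counting function `𝒩(r) = Σ_l |B_r(0) ∩ B_R(y_l)| / (πR²)`. -/
def countN (R : ℝ) {m : ℕ} (y : Fin m → Plane) (r : ℝ) : ℝ :=
  ∑ l : Fin m, (volume (Metric.ball (0 : Plane) r ∩ Metric.ball (y l) R)).toReal / (π * R ^ 2)

lemma vol_ball_plane (x : Plane) {r : ℝ} (hr : 0 ≤ r) :
    volume (Metric.ball x r) = ENNReal.ofReal (π * r ^ 2) := by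
  rw [EuclideanSpace.volume_ball]
  simp [Fintype.card_fin]
  norm_num [Real.Gamma_two, sq_sqrt pi_nonneg]
  rw [← ENNReal.ofReal_pow hr, ← ENNReal.ofReal_mul (by positivity)]
  ring_nf

/-- The (unnormalized) single-particle term. -/
def termF (R : ℝ) (c : Plane) (r : ℝ) : ℝ :=
  (volume (Metric.ball (0 : Plane) r ∩ Metric.ball c R)).toReal

lemma vol_inter_ne_top (R : ℝ) (c : Plane) (r : ℝ) :
    volume (Metric.ball (0 : Plane) r ∩ Metric.ball c R) ≠ ⊤ :=
  ((measure_mono Set.inter_subset_right).trans_lt measure_ball_lt_top).ne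

lemma termF_nonneg (R : ℝ) (c : Plane) (r : ℝ) : 0 ≤ termF R c r :=
  ENNReal.toReal_nonneg

lemma termF_zero {R : ℝ} (c : Plane) {r : ℝ} (h : r ≤ ‖c‖ - R) : termF R c r = 0 := by
  have hd : Disjoint (Metric.ball (0 : Plane) r) (Metric.ball c R) :=
    Metric.ball_disjoint_ball (by rw [dist_zero_left]; linarith)
  rw [termF, Set.disjoint_iff_inter_eq_empty.mp hd, measure_empty, ENNReal.toReal_zero]

lemma termF_full {R : ℝ} (hR : 0 ≤ R) (c : Plane) {r : ℝ} (h : ‖c‖ + R ≤ r) :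
    termF R c r = π * R ^ 2 := by
  have hs : Metric.ball c R ⊆ Metric.ball (0 : Plane) r :=
    Metric.ball_subset_ball' (by rw [dist_zero_right]; linarith)
  rw [termF, Set.inter_eq_right.mpr hs, vol_ball_plane c hR, ENNReal.toReal_ofReal (by positivity)]

lemma termF_le {R : ℝ} (hR : 0 ≤ R) (c : Plane) (r : ℝ) : termF R c r ≤ π * R ^ 2 := by
  rw [termF]
  have := measure_mono (μ := volume) (Set.inter_subset_right
    (s := Metric.ball (0 : Plane) r) (t := Metric.ball c R))
  rw [vol_ball_plane c hR] at this
  calc (volume (Metric.ball (0 : Plane) r ∩ Metric.ball c R)).toReal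
      ≤ (ENNReal.ofReal (π * R ^ 2)).toReal :=
        ENNReal.toReal_mono ENNReal.ofReal_ne_top this
    _ = π * R ^ 2 := ENNReal.toReal_ofReal (by positivity)

lemma termF_mono (R : ℝ) (c : Plane) {a b : ℝ} (hab : a ≤ b) : termF R c a ≤ termF R c b :=
  ENNReal.toReal_mono (vol_inter_ne_top R c b)
    (measure_mono (Set.inter_subset_inter_left _ (Metric.ball_subset_ball hab)))

lemma termF_diff_le (R : ℝ) (c : Plane) {a b : ℝ} (ha : 0 ≤ a) (hab : a ≤ b) :
    termF R c b ≤ termF R c a + (π * b ^ 2 - π * a ^ 2) := by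
  set Ba := Metric.ball (0 : Plane) a
  set Bb := Metric.ball (0 : Plane) b
  have hsub : Ba ⊆ Bb := Metric.ball_subset_ball hab
  have hdiff : volume (Bb \ Ba) = ENNReal.ofReal (π * b ^ 2 - π * a ^ 2) := by
    rw [measure_diff hsub measurableSet_ball.nullMeasurableSet measure_ball_lt_top.ne,
      vol_ball_plane _ ha, vol_ball_plane _ (ha.trans hab),
      ← ENNReal.ofReal_sub _ (by positivity)]
  have hset : Bb ∩ Metric.ball c R ⊆ (Ba ∩ Metric.ball c R) ∪ (Bb \ Ba) := by
    intro x hx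
    by_cases hxa : x ∈ Ba
    · exact Or.inl ⟨hxa, hx.2⟩
    · exact Or.inr ⟨hx.1, hxa⟩
  have h1 : volume (Bb ∩ Metric.ball c R) ≤
      volume (Ba ∩ Metric.ball c R) + ENNReal.ofReal (π * b ^ 2 - π * a ^ 2) := by
    rw [← hdiff]
    exact (measure_mono hset).trans (measure_union_le _ _)
  have h2 := ENNReal.toReal_mono (by
      exact ENNReal.add_ne_top.mpr ⟨vol_inter_ne_top R c a, ENNReal.ofReal_ne_top⟩) h1
  rw [ENNReal.toReal_add (vol_inter_ne_top R c a) ENNReal.ofReal_ne_top,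
    ENNReal.toReal_ofReal (by nlinarith [mul_nonneg pi_pos.le (show (0:ℝ) ≤ b^2 - a^2 by nlinarith)])] at h2
  exact h2

lemma termF_continuousOn (R : ℝ) (c : Plane) {α β : ℝ} (hα : 0 ≤ α) :
    ContinuousOn (termF R c) (Set.Icc α β) := by
  rcases lt_or_ge β α with h | h
  · rw [Set.Icc_eq_empty (not_le.mpr h)]; exact continuousOn_empty _
  have hβ : 0 ≤ β := hα.trans h
  apply LipschitzOnWith.continuousOn (K := Real.toNNReal (2 * π * β))
  apply LipschitzOnWith.of_dist_le_mul
  have key : ∀ x ∈ Set.Icc α β, ∀ y ∈ Set.Icc α β, y ≤ x →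
      dist (termF R c x) (termF R c y) ≤ (2 * π * β) * dist x y := by
    intro x hx y hy hyx
    rw [Real.dist_eq, Real.dist_eq, abs_of_nonneg (by linarith [termF_mono R c hyx]),
      abs_of_nonneg (by linarith)]
    have h1 := termF_diff_le R c (hα.trans hy.1) hyx
    nlinarith [h1, pi_pos, mul_nonneg (sub_nonneg.2 hyx)
      (show (0:ℝ) ≤ 2 * β - x - y by linarith [hx.2, hy.2])]
  intro x hx y hy
  have hcoe : ((Real.toNNReal (2 * π * β)) : ℝ) = 2 * π * β :=
    Real.coe_toNNReal _ (by positivity)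
  rw [hcoe]
  rcases le_total y x with h' | h'
  · exact key x hx y hy h'
  · rw [dist_comm (termF R c x), dist_comm x]
    exact key y hy x hx h'

/-- **Lemma 4.4.**  If `R/2 ≤ z⁻ < z⁺`, `𝒩(z⁻), 𝒩(z⁺) ∈ ℤ` and `𝒩(r) ∉ ℤ` for every
`r ∈ (z⁻, z⁺)`, then some particle disk, centered at distance `d = |y_l|` from the
origin, satisfies `[z⁻, z⁺] ⊆ [d - R, d + R]`: its angular projection completely covers
the interval. -/
theorem one_particle_covers_interval
    (R : ℝ) (hR : 0 < R) (m : ℕ) (y : Fin m → Plane)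
    (zm zp : ℝ) (hzm : R / 2 ≤ zm) (hzz : zm < zp)
    (hsm : ∃ k : ℤ, countN R y zm = k)
    (hsp : ∃ k : ℤ, countN R y zp = k)
    (hint : ∀ r ∈ Set.Ioo zm zp, ∀ k : ℤ, countN R y r ≠ k) :
    ∃ l : Fin m, Set.Icc zm zp ⊆ Set.Icc (‖y l‖ - R) (‖y l‖ + R) := by
  classical
  have hzm0 : 0 < zm := lt_of_lt_of_le (by linarith) hzm
  have hπR : 0 < π * R ^ 2 := by positivity
  by_contra hcon
  push_neg at hcon
  -- S : particles whose left edge is left of zm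
  set S : Finset (Fin m) := Finset.univ.filter (fun l => ‖y l‖ - R ≤ zm) with hS
  -- every particle in S must end before zp
  have hSend : ∀ l ∈ S, ‖y l‖ + R < zp := by
    intro l hl
    rw [hS, Finset.mem_filter] at hl
    by_contra hnot
    exact hcon l (Set.Icc_subset_Icc hl.2 (not_lt.mp hnot))
  have hAstart : ∀ l : Fin m, l ∉ S → zm < ‖y l‖ - R := by
    intro l hl
    rw [hS, Finset.mem_filter] at hl
    push_neg at hl
    exact hl (Finset.mem_univ l)
  -- countN as a sum of termF
  have hcount : ∀ r, countN R y r = ∑ l : Fin m, termF R (y l) r / (π * R ^ 2) := by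
    intro r; rfl
  -- evaluation lemma
  have heval : ∀ r : ℝ, (∀ l ∈ S, ‖y l‖ + R ≤ r) → (∀ l ∉ S, r ≤ ‖y l‖ - R) →
      countN R y r = (S.card : ℤ) := by
    intro r h1 h2
    rw [hcount, ← Finset.sum_filter_add_sum_filter_not Finset.univ (fun l => ‖y l‖ - R ≤ zm)]
    have e1 : ∀ l ∈ S, termF R (y l) r / (π * R ^ 2) = 1 := by
      intro l hl
      rw [termF_full hR.le _ (h1 l hl), div_self hπR.ne']
    have e2 : ∀ l ∈ Finset.univ.filter (fun l => ¬ (‖y l‖ - R ≤ zm)),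
        termF R (y l) r / (π * R ^ 2) = 0 := by
      intro l hl
      rw [Finset.mem_filter] at hl
      have : l ∉ S := by rw [hS, Finset.mem_filter]; tauto
      rw [termF_zero _ (h2 l this), zero_div]
    rw [Finset.sum_congr rfl e1, Finset.sum_congr rfl e2]
    push_cast
    simp [hS]
  -- definitions of α and β
  set A : Finset (Fin m) := Finset.univ.filter (fun l => ¬ (‖y l‖ - R ≤ zm)) with hA
  have hAS : ∀ l : Fin m, l ∈ A ↔ l ∉ S := by
    intro l; simp [hA, hS]
  set α : ℝ := if h : A.Nonempty then min zp (A.inf' h (fun l => ‖y l‖ - R)) else zp with hαdef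
  set β : ℝ := if h : S.Nonempty then max zm (S.sup' h (fun l => ‖y l‖ + R)) else zm with hβdef
  have hαzp : α ≤ zp := by
    rw [hαdef]; split
    · exact min_le_left _ _
    · exact le_refl _
  have hzmα : zm < α := by
    rw [hαdef]; split
    case isTrue h =>
      refine lt_min hzz ?_
      rw [Finset.lt_inf'_iff]
      intro l hl
      exact hAstart l ((hAS l).mp hl)
    case isFalse => exact hzz
  have hαA : ∀ l ∉ S, α ≤ ‖y l‖ - R := by
    intro l hl
    have hlA : l ∈ A := (hAS l).mpr hl
    rw [hαdef]
    rw [dif_pos ⟨l, hlA⟩]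
    exact (min_le_right _ _).trans (Finset.inf'_le _ hlA)
  have hβzm : zm ≤ β := by
    rw [hβdef]; split
    · exact le_max_left _ _
    · exact le_refl _
  have hβzp : β < zp := by
    rw [hβdef]; split
    case isTrue h =>
      refine max_lt hzz ?_
      rw [Finset.sup'_lt_iff]
      intro l hl
      exact hSend l hl
    case isFalse => exact hzz
  have hβS : ∀ l ∈ S, ‖y l‖ + R ≤ β := by
    intro l hl
    rw [hβdef, dif_pos ⟨l, hl⟩]
    have h1 : ‖y l‖ + R ≤ S.sup' ⟨l, hl⟩ (fun l => ‖y l‖ + R) := Finset.le_sup' (fun l => ‖y l‖ + R) hl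
    exact h1.trans (le_max_right _ _)
  rcases lt_or_ge β α with hβα | hαβ
  · -- easy case: a gap between β and α
    set r : ℝ := (β + α) / 2 with hrdef
    have hr1 : β < r := by rw [hrdef]; linarith
    have hr2 : r < α := by rw [hrdef]; linarith
    have hrIoo : r ∈ Set.Ioo zm zp := ⟨lt_of_le_of_lt hβzm hr1, lt_of_lt_of_le hr2 hαzp⟩
    exact hint r hrIoo (S.card : ℤ)
      (heval r (fun l hl => (hβS l hl).trans hr1.le) (fun l hl => hr2.le.trans (hαA l hl)))
  · -- IVT case
    have hα0 : 0 ≤ α := (hzm0.trans hzmα).le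
    have hcontOn : ContinuousOn (countN R y) (Set.Icc α β) := by
      rw [show countN R y = fun r => ∑ l : Fin m, termF R (y l) r / (π * R ^ 2) from rfl]
      apply continuousOn_finset_sum
      intro l _
      exact (termF_continuousOn R (y l) hα0).div_const _
    have hNα : countN R y α ≤ S.card := by
      rw [hcount]
      calc ∑ l : Fin m, termF R (y l) α / (π * R ^ 2)
          ≤ ∑ l : Fin m, (if l ∈ S then 1 else 0) := by
            apply Finset.sum_le_sum
            intro l _
            by_cases hl : l ∈ S
            · rw [if_pos hl]
              exact div_le_one_of_le₀ (termF_le hR.le _ _) hπR.le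
            · rw [if_neg hl, termF_zero _ (hαA l hl), zero_div]
        _ = S.card := by rw [Finset.sum_ite_mem, Finset.univ_inter, Finset.sum_const,
              nsmul_eq_mul, mul_one]
    have hNβ : (S.card : ℝ) ≤ countN R y β := by
      rw [hcount]
      calc (S.card : ℝ) = ∑ l : Fin m, (if l ∈ S then (1:ℝ) else 0) := by
            rw [Finset.sum_ite_mem, Finset.univ_inter, Finset.sum_const, nsmul_eq_mul, mul_one]
        _ ≤ ∑ l : Fin m, termF R (y l) β / (π * R ^ 2) := by
            apply Finset.sum_le_sum
            intro l _
            by_cases hl : l ∈ S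
            · rw [if_pos hl, termF_full hR.le _ (hβS l hl), div_self hπR.ne']
            · rw [if_neg hl]
              exact div_nonneg (termF_nonneg R (y l) β) hπR.le
    have hmem : (S.card : ℝ) ∈ Set.Icc (countN R y α) (countN R y β) := ⟨hNα, hNβ⟩
    obtain ⟨r, hrIcc, hrval⟩ := intermediate_value_Icc hαβ hcontOn hmem
    have hrIoo : r ∈ Set.Ioo zm zp :=
      ⟨lt_of_lt_of_le hzmα hrIcc.1, lt_of_le_of_lt hrIcc.2 hβzp⟩
    exact hint r hrIoo (S.card : ℤ) (by rw [hrval]; push_cast; ring)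
end
end

section
/- For ν > 0, let λ(ν) := inf { (∫₀¹ (|u'(r)|² + ν² r^{-2} |u(r)|²) r dr) / (∫₀¹ |u(r)|² r dr) }, the infimum over all nonzero u : [0,1] → ℂ that are continuous on [0,1], continuously differentiable on (0,1], satisfy u(0) = 0 and have finite numerator. Then 2ν ≤ λ(ν) ≤ 2ν(1+ν). (Proposition B.1; λ(ν) equals (j'_ν)², the square of the first positive zero of the derivative of the Bessel function J_ν, so this gives √(2ν) ≤ j'_ν ≤ √(2ν(1+ν)).) -/
open MeasureTheory Real Set

noncomputable section

/-- The set of Rayleigh quotients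
`(∫₀¹ (|u'|² + ν² r⁻²|u|²) r dr) / (∫₀¹ |u|² r dr)` over nonzero `u : [0,1] → ℂ`
continuous on `[0,1]`, continuously differentiable on `(0,1]`, with `u(0) = 0` and
finite numerator. -/
def besselRayleighSet (ν : ℝ) : Set ℝ :=
  {t : ℝ | ∃ u u' : ℝ → ℂ,
    ContinuousOn u (Set.Icc 0 1) ∧
    (∀ r ∈ Set.Ioc (0:ℝ) 1, HasDerivAt u (u' r) r) ∧
    ContinuousOn u' (Set.Ioc 0 1) ∧
    u 0 = 0 ∧ (∃ r ∈ Set.Icc (0:ℝ) 1, u r ≠ 0) ∧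
    IntervalIntegrable (fun r => (‖u' r‖ ^ 2 + ν ^ 2 / r ^ 2 * ‖u r‖ ^ 2) * r) volume 0 1 ∧
    t = (∫ r in (0:ℝ)..1, (‖u' r‖ ^ 2 + ν ^ 2 / r ^ 2 * ‖u r‖ ^ 2) * r) /
        (∫ r in (0:ℝ)..1, ‖u r‖ ^ 2 * r)}

/-- `λ(ν) = (j'_ν)²` expressed variationally. -/
def lam (ν : ℝ) : ℝ := sInf (besselRayleighSet ν)

/-! With `g = ‖u‖²`, AM–GM gives `ν |g'| ≤ (‖u'‖² + ν² r⁻² ‖u‖²) r` pointwise, so, as `g 0 = 0`,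
the fundamental theorem of calculus bounds `g` on `[0, 1]` by `N / ν`, where `N` is the numerator.
Hence the denominator `∫₀¹ g r dr` is at most `N / (2ν)`. For the upper bound, `u = r^ν` has
numerator `ν` and denominator `1 / (2ν + 2)`. -/

lemma le_integral_abs_of_hasDerivAt {g g' : ℝ → ℝ} {a b x : ℝ} (hx : x ∈ Icc a b)
    (hg : ContinuousOn g (Icc a b)) (hderiv : ∀ r ∈ Ioo a b, HasDerivAt g (g' r) r)
    (hg' : IntervalIntegrable g' volume a b) (hga : g a = 0) :
    g x ≤ ∫ r in a..b, |g' r| := by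
  have hsub : uIcc a x ⊆ uIcc a b := uIcc_subset_uIcc_left (Icc_subset_uIcc hx)
  have hftc : ∫ r in a..x, g' r = g x := by
    rw [intervalIntegral.integral_eq_sub_of_hasDeriv_right_of_le hx.1
      (hg.mono (Icc_subset_Icc le_rfl hx.2))
      (fun r hr => (hderiv r ⟨hr.1, hr.2.trans_le hx.2⟩).hasDerivWithinAt)
      (hg'.mono_set hsub), hga, sub_zero]
  calc g x = ∫ r in a..x, g' r := hftc.symm
    _ ≤ ∫ r in a..x, |g' r| :=
        intervalIntegral.integral_mono_on hx.1 (hg'.mono_set hsub) (hg'.abs.mono_set hsub)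
          fun r _ => le_abs_self _
    _ ≤ ∫ r in a..b, |g' r| :=
        intervalIntegral.integral_mono_interval le_rfl hx.1 hx.2
          (Filter.Eventually.of_forall fun r => abs_nonneg _) hg'.abs

lemma integral_mul_id_le_half {g : ℝ → ℝ} {M : ℝ} (hg : ContinuousOn g (Icc 0 1))
    (hle : ∀ r ∈ Icc (0 : ℝ) 1, g r ≤ M) :
    ∫ r in (0 : ℝ)..1, g r * r ≤ M / 2 := by
  have hint : IntervalIntegrable (fun r => g r * r) volume 0 1 :=
    (hg.mul continuousOn_id).intervalIntegrable_of_Icc zero_le_one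
  calc ∫ r in (0 : ℝ)..1, g r * r ≤ ∫ r in (0 : ℝ)..1, M * r :=
        intervalIntegral.integral_mono_on zero_le_one hint
          (intervalIntegral.intervalIntegrable_id.const_mul M)
          fun r hr => mul_le_mul_of_nonneg_right (hle r hr) hr.1
    _ = M / 2 := by
        rw [intervalIntegral.integral_const_mul, integral_id]; ring

section LowerBound

variable {E : Type*} [NormedAddCommGroup E] [InnerProductSpace ℝ E]

lemma mul_abs_two_inner_le_rayleigh_integrand {ν r : ℝ} (hν : 0 ≤ ν) (hr : 0 < r) (x v : E) :
    ν * |2 * inner ℝ x v| ≤ (‖v‖ ^ 2 + ν ^ 2 / r ^ 2 * ‖x‖ ^ 2) * r := by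
  have hcs : |inner ℝ x v| ≤ ‖x‖ * ‖v‖ := abs_real_inner_le_norm x v
  have hamgm : 2 * ν * (‖x‖ * ‖v‖) * r ≤ ‖v‖ ^ 2 * r ^ 2 + ν ^ 2 * ‖x‖ ^ 2 := by
    nlinarith [sq_nonneg (‖v‖ * r - ν * ‖x‖)]
  calc ν * |2 * inner ℝ x v| ≤ 2 * ν * (‖x‖ * ‖v‖) := by
        rw [abs_mul, abs_two]; nlinarith
    _ ≤ (‖v‖ ^ 2 + ν ^ 2 / r ^ 2 * ‖x‖ ^ 2) * r := by
        rw [show (‖v‖ ^ 2 + ν ^ 2 / r ^ 2 * ‖x‖ ^ 2) * r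
            = (‖v‖ ^ 2 * r ^ 2 + ν ^ 2 * ‖x‖ ^ 2) / r by field_simp, le_div_iff₀ hr]
        exact hamgm

theorem two_mul_integral_le_rayleigh_numerator {ν : ℝ} {u u' : ℝ → E} (hν : 0 < ν)
    (hu : ContinuousOn u (Icc 0 1)) (hderiv : ∀ r ∈ Ioc (0 : ℝ) 1, HasDerivAt u (u' r) r)
    (hu' : ContinuousOn u' (Ioc 0 1)) (hu0 : u 0 = 0)
    (hint : IntervalIntegrable (fun r => (‖u' r‖ ^ 2 + ν ^ 2 / r ^ 2 * ‖u r‖ ^ 2) * r)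
      volume 0 1) :
    2 * ν * ∫ r in (0 : ℝ)..1, ‖u r‖ ^ 2 * r ≤
      ∫ r in (0 : ℝ)..1, (‖u' r‖ ^ 2 + ν ^ 2 / r ^ 2 * ‖u r‖ ^ 2) * r := by
  set g' : ℝ → ℝ := fun r => 2 * inner ℝ (u r) (u' r)
  have hbound : ∀ r ∈ Ioc (0 : ℝ) 1,
      ν * |g' r| ≤ (‖u' r‖ ^ 2 + ν ^ 2 / r ^ 2 * ‖u r‖ ^ 2) * r :=
    fun r hr => mul_abs_two_inner_le_rayleigh_integrand hν.le hr.1 _ _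
  have hg'c : ContinuousOn g' (Ioc 0 1) :=
    continuousOn_const.mul <| continuous_inner.comp_continuousOn <|
      (hu.mono Ioc_subset_Icc_self).prodMk hu'
  have hg'int : IntervalIntegrable g' volume 0 1 := by
    rw [intervalIntegrable_iff_integrableOn_Ioc_of_le zero_le_one] at hint ⊢
    refine Integrable.mono' (hint.const_mul ν⁻¹)
      (hg'c.aestronglyMeasurable measurableSet_Ioc) ?_
    filter_upwards [ae_restrict_mem measurableSet_Ioc] with r hr
    rw [Real.norm_eq_abs, le_inv_mul_iff₀ hν]
    exact hbound r hr
  have hsup : ∀ x ∈ Icc (0 : ℝ) 1, ‖u x‖ ^ 2 ≤ ∫ r in (0 : ℝ)..1, |g' r| := fun x hx =>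
    le_integral_abs_of_hasDerivAt (g := fun r => ‖u r‖ ^ 2) hx (hu.norm.pow 2)
      (fun r hr => (hderiv r (Ioo_subset_Ioc_self hr)).norm_sq) hg'int (by simp [hu0])
  calc 2 * ν * ∫ r in (0 : ℝ)..1, ‖u r‖ ^ 2 * r
      ≤ 2 * ν * ((∫ r in (0 : ℝ)..1, |g' r|) / 2) :=
        mul_le_mul_of_nonneg_left (integral_mul_id_le_half (hu.norm.pow 2) hsup) (by positivity)
    _ = ∫ r in (0 : ℝ)..1, ν * |g' r| := by
        rw [intervalIntegral.integral_const_mul]; ring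
    _ ≤ ∫ r in (0 : ℝ)..1, (‖u' r‖ ^ 2 + ν ^ 2 / r ^ 2 * ‖u r‖ ^ 2) * r :=
        intervalIntegral.integral_mono_on_of_le_Ioo zero_le_one (hg'int.abs.const_mul ν) hint
          fun r hr => hbound r (Ioo_subset_Ioc_self hr)

end LowerBound

lemma two_mul_le_of_mem_besselRayleighSet {ν t : ℝ} (hν : 0 < ν) (ht : t ∈ besselRayleighSet ν) :
    2 * ν ≤ t := by
  obtain ⟨u, u', hu, hderiv, hu', hu0, ⟨r₀, hr₀, hur₀⟩, hint, rfl⟩ := ht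
  have hr₀pos : 0 < r₀ := hr₀.1.lt_of_ne (by rintro rfl; exact hur₀ hu0)
  have hden : 0 < ∫ r in (0 : ℝ)..1, ‖u r‖ ^ 2 * r :=
    intervalIntegral.integral_pos zero_lt_one ((hu.norm.pow 2).mul continuousOn_id)
      (fun r hr => mul_nonneg (by positivity) hr.1.le)
      ⟨r₀, hr₀, mul_pos (pow_pos (norm_pos_iff.2 hur₀) 2) hr₀pos⟩
  rw [le_div_iff₀ hden]
  exact two_mul_integral_le_rayleigh_numerator hν hu hderiv hu' hu0 hint

lemma rayleigh_integrand_rpow {ν r : ℝ} (hr : 0 < r) :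
    ((ν * r ^ (ν - 1)) ^ 2 + ν ^ 2 / r ^ 2 * (r ^ ν) ^ 2) * r = 2 * ν ^ 2 * r ^ (2 * ν - 1) := by
  rw [Real.rpow_sub_one hr.ne', Real.rpow_sub_one hr.ne', mul_comm 2 ν, Real.rpow_mul hr.le,
    Real.rpow_two]
  field_simp
  ring

lemma rpow_sq_mul_self {ν r : ℝ} (hr : 0 < r) : (r ^ ν) ^ 2 * r = r ^ (2 * ν + 1) := by
  rw [Real.rpow_add_one hr.ne', mul_comm 2 ν, Real.rpow_mul hr.le, Real.rpow_two]

lemma rpow_mem_besselRayleighSet {ν : ℝ} (hν : 0 < ν) :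
    2 * ν * (1 + ν) ∈ besselRayleighSet ν := by
  have hnum : EqOn (fun r : ℝ => 2 * ν ^ 2 * r ^ (2 * ν - 1)) (fun r =>
      (‖((ν * r ^ (ν - 1) : ℝ) : ℂ)‖ ^ 2 + ν ^ 2 / r ^ 2 * ‖((r ^ ν : ℝ) : ℂ)‖ ^ 2) * r)
      (Ioo 0 1) := fun r hr => by
    simp only [Complex.norm_real, Real.norm_eq_abs, sq_abs]
    exact (rayleigh_integrand_rpow hr.1).symm
  have hden : EqOn (fun r : ℝ => r ^ (2 * ν + 1)) (fun r => ‖((r ^ ν : ℝ) : ℂ)‖ ^ 2 * r)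
      (Ioo 0 1) := fun r hr => by
    simp only [Complex.norm_real, Real.norm_eq_abs, sq_abs]
    exact (rpow_sq_mul_self hr.1).symm
  refine ⟨fun r => ((r ^ ν : ℝ) : ℂ), fun r => ((ν * r ^ (ν - 1) : ℝ) : ℂ), ?_, ?_, ?_, ?_,
    ⟨1, right_mem_Icc.2 zero_le_one, by simp⟩, ?_, ?_⟩
  · exact Complex.continuous_ofReal.comp_continuousOn
      (Real.continuous_rpow_const hν.le).continuousOn
  · exact fun r hr => (Real.hasDerivAt_rpow_const (Or.inl hr.1.ne')).ofReal_comp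
  · exact Complex.continuous_ofReal.comp_continuousOn <| continuousOn_const.mul
      fun r hr => (Real.continuousAt_rpow_const r (ν - 1) (Or.inl hr.1.ne')).continuousWithinAt
  · simp [Real.zero_rpow hν.ne']
  · exact ((intervalIntegral.intervalIntegrable_rpow' (by linarith)).const_mul _).congr_uIoo
      (uIoo_of_le (zero_le_one (α := ℝ)) ▸ hnum)
  · rw [← intervalIntegral.integral_congr_Ioo_of_le zero_le_one hnum,
      ← intervalIntegral.integral_congr_Ioo_of_le zero_le_one hden,
      intervalIntegral.integral_const_mul, integral_rpow (Or.inl (by linarith)),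
      integral_rpow (Or.inl (by linarith)), Real.one_rpow, Real.one_rpow,
      Real.zero_rpow (by linarith), Real.zero_rpow (by linarith)]
    field_simp
    ring

/-- **Proposition B.1.**  For `ν > 0`, `2ν ≤ λ(ν) ≤ 2ν(1+ν)`, i.e.
`√(2ν) ≤ j'_ν ≤ √(2ν(1+ν))` for the first positive zero `j'_ν` of `J_ν'`. -/
theorem bessel_derivative_zero_bounds (ν : ℝ) (hν : 0 < ν) :
    2 * ν ≤ lam ν ∧ lam ν ≤ 2 * ν * (1 + ν) :=
  ⟨le_csInf ⟨_, rpow_mem_besselRayleighSet hν⟩ fun _ => two_mul_le_of_mem_besselRayleighSet hν,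
   csInf_le ⟨2 * ν, fun _ => two_mul_le_of_mem_besselRayleighSet hν⟩
     (rpow_mem_besselRayleighSet hν)⟩
end
end
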